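/- Assume in addition c > 1 and that 1 + 2λ ρ^{h(ρ)} cos(π h(ρ)) + λ² ρ^{2 h(ρ)} ≠ 0 for every ρ ∈ (0,∞) ∖ {c}. Then the real-valued function ρ ↦ λ ρ^{h(ρ)} sin(π h(ρ)) e^{−ρ t} / (ρ(1 + 2λ ρ^{h(ρ)} cos(π h(ρ)) + λ² ρ^{2 h(ρ)})) is Lebesgue integrable on (0,∞). -/

import Mathlib

/-!
Write `x = λ ρ^{h(ρ)}` and `θ = π h(ρ)`. The denominator is `|1 + x e^{iθ}|²`, which dominates
both `(x sin θ)²` and `(1 - x)²`, so the integrand is at most `e^{-ρt} / (ρ |1 - x|)`. Hence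
only the places where `x` may approach `1` need care. As `ρ → 0⁺` we have `h ≤ -α₁`, so
`x ≥ λ ρ^{-α₁} → ∞` and the integrand is `O(ρ^{α₁ - 1})`. As `ρ → ∞`, `h → -α₁` sends `x → 0`
and `e^{-ρt}` gives decay. At the pole `ρ = c` of `h`, `h → -∞` from the left and `h → +∞` from
the right; since `c > 1` this sends `x` to `0` and to `∞` respectively, so the integrand stays
bounded near `c`. Everywhere else the integrand is continuous, because the denominator does not
vanish.
-/

open MeasureTheory Filter Set

/-- `g(s) = s·A(s) = (α₁ s + α₂ c)/(s + c)`, where `A` is the Laplace transform of the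
exponential transition function `α(t) = α₂ + (α₁ - α₂)e^{-c t}`. -/
noncomputable def gfun (α₁ α₂ c : ℝ) (s : ℂ) : ℂ := ((α₁ : ℂ) * s + (α₂ : ℂ) * c) / (s + c)

/-- The Laplace-domain solution `ũ(s) = s^{g(s)-1}/(s^{g(s)} + λ)` (principal powers) of the
Scarpi relaxation equation with exponential transition function and `u₀ = 1`. -/
noncomputable def utilde (α₁ α₂ c lam : ℝ) (s : ℂ) : ℂ :=
  s ^ (gfun α₁ α₂ c s - 1) / (s ^ gfun α₁ α₂ c s + (lam : ℂ))

/-- `h(ρ) = (α₁ ρ - α₂ c)/(c - ρ)`; note `g(-ρ) = -h(ρ)`. -/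
noncomputable def hfun (α₁ α₂ c : ℝ) (ρ : ℝ) : ℝ := (α₁ * ρ - α₂ * c) / (c - ρ)

open Real Topology Asymptotics

section RealAnalysis

variable {α : Type*} {l : Filter α} {f g u : α → ℝ}

lemma tendsto_rpow_nhds_zero_of_log_mul (hf : ∀ᶠ x in l, 0 < f x)
    (h : Tendsto (fun x ↦ log (f x) * g x) l atBot) : Tendsto (fun x ↦ f x ^ g x) l (𝓝 0) :=
  (tendsto_exp_atBot.comp h).congr' (hf.mono fun _ hx ↦ (rpow_def_of_pos hx _).symm)

lemma tendsto_rpow_atTop_of_log_mul (hf : ∀ᶠ x in l, 0 < f x)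
    (h : Tendsto (fun x ↦ log (f x) * g x) l atTop) : Tendsto (fun x ↦ f x ^ g x) l atTop :=
  (tendsto_exp_atTop.comp h).congr' (hf.mono fun _ hx ↦ (rpow_def_of_pos hx _).symm)

lemma eventually_half_le_abs_one_sub_of_tendsto_zero (hu : Tendsto u l (𝓝 0)) :
    ∀ᶠ x in l, 1 / 2 ≤ |1 - u x| :=
  (hu.eventually (gt_mem_nhds (by norm_num : (0 : ℝ) < 1 / 2))).mono fun x hx ↦
    (le_abs_self _).trans' (by linarith)

lemma eventually_half_le_abs_one_sub_of_tendsto_atTop (hu : Tendsto u l atTop) :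
    ∀ᶠ x in l, 1 / 2 ≤ |1 - u x| :=
  (hu.eventually_ge_atTop (3 / 2)).mono fun x hx ↦ (neg_le_abs _).trans' (by linarith)

lemma tendsto_inv_const_sub_nhdsLT (c : ℝ) : Tendsto (fun ρ : ℝ ↦ (c - ρ)⁻¹) (𝓝[<] c) atTop := by
  have h : MapsTo (fun ρ : ℝ ↦ c - ρ) (Iio c) (Ioi 0) := fun _ hρ ↦ sub_pos.2 (mem_Iio.1 hρ)
  refine tendsto_inv_nhdsGT_zero.comp ?_
  simpa using (continuous_sub_left c).continuousWithinAt.tendsto_nhdsWithin h (x := c)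

lemma tendsto_inv_const_sub_nhdsGT (c : ℝ) : Tendsto (fun ρ : ℝ ↦ (c - ρ)⁻¹) (𝓝[>] c) atBot := by
  have h : MapsTo (fun ρ : ℝ ↦ c - ρ) (Ioi c) (Iio 0) := fun _ hρ ↦ sub_neg.2 (mem_Ioi.1 hρ)
  refine tendsto_inv_nhdsLT_zero.comp ?_
  simpa using (continuous_sub_left c).continuousWithinAt.tendsto_nhdsWithin h (x := c)

lemma abs_mul_sin_mul_abs_one_sub_le {x : ℝ} (hx : 0 ≤ x) (θ : ℝ) :
    |x * sin θ| * |1 - x| ≤ 1 + 2 * x * cos θ + x ^ 2 := by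
  have h₁ : (x * sin θ) ^ 2 ≤ 1 + 2 * x * cos θ + x ^ 2 := by
    nlinarith [sin_sq_add_cos_sq θ, sq_nonneg (1 + x * cos θ)]
  have h₂ : (1 - x) ^ 2 ≤ 1 + 2 * x * cos θ + x ^ 2 := by
    nlinarith [neg_one_le_cos θ]
  nlinarith [sq_nonneg (|x * sin θ| - |1 - x|), sq_abs (x * sin θ), sq_abs (1 - x)]

end RealAnalysis

lemma MeasureTheory.IntegrableAtFilter.nhds_of_nhdsNE {X E : Type*} [TopologicalSpace X]
    [MeasurableSpace X] {μ : Measure X} [NullSingletonClass μ] [NormedAddCommGroup E]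
    {f : X → E} {a : X}
    (h : IntegrableAtFilter f (𝓝[≠] a) μ) : IntegrableAtFilter f (𝓝 a) μ :=
  (h.filter_mono (inf_le_inf_left _ (le_principal_iff.2 (compl_mem_ae_iff.2
    (measure_singleton a))))).of_inf_ae

noncomputable def relaxationKernel (lam t h ρ : ℝ) : ℝ :=
  lam * ρ ^ h * sin (π * h) * exp (-ρ * t) /
    (ρ * (1 + 2 * lam * ρ ^ h * cos (π * h) + lam ^ 2 * ρ ^ (2 * h)))

section Kernel

variable {lam t h ρ : ℝ}

lemma relaxationKernel_eq (hρ : 0 < ρ) : relaxationKernel lam t h ρ =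
    lam * ρ ^ h * sin (π * h) * exp (-ρ * t) /
      (ρ * (1 + 2 * (lam * ρ ^ h) * cos (π * h) + (lam * ρ ^ h) ^ 2)) := by
  rw [relaxationKernel, two_mul h, rpow_add hρ]
  ring

lemma abs_relaxationKernel_mul_abs_one_sub_le (hlam : 0 ≤ lam) (hρ : 0 < ρ) :
    |relaxationKernel lam t h ρ| * |1 - lam * ρ ^ h| ≤ exp (-ρ * t) / ρ := by
  set x := lam * ρ ^ h
  have hx : 0 ≤ x := mul_nonneg hlam (rpow_nonneg hρ.le h)
  set D := 1 + 2 * x * cos (π * h) + x ^ 2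
  have hxD := abs_mul_sin_mul_abs_one_sub_le hx (π * h)
  rcases ((mul_nonneg (abs_nonneg _) (abs_nonneg _)).trans hxD).eq_or_lt with hD | hD
  · -- a vanishing denominator makes the kernel `0`, by the convention `a / 0 = 0`
    rw [relaxationKernel_eq hρ, ← hD]
    simp only [mul_zero, div_zero, abs_zero, zero_mul]
    positivity
  calc |relaxationKernel lam t h ρ| * |1 - x|
      = |x * sin (π * h)| * |1 - x| * (exp (-ρ * t) / (ρ * D)) := by
        rw [relaxationKernel_eq hρ, abs_div, abs_mul, abs_of_pos (exp_pos _),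
          abs_of_pos (mul_pos hρ hD)]
        ring
    _ ≤ D * (exp (-ρ * t) / (ρ * D)) := by gcongr
    _ = exp (-ρ * t) / ρ := by
        have : D ≠ 0 := hD.ne'
        field_simp

lemma abs_relaxationKernel_le_of_half_le (hlam : 0 ≤ lam) (hρ : 0 < ρ)
    (hsep : 1 / 2 ≤ |1 - lam * ρ ^ h|) : |relaxationKernel lam t h ρ| ≤ 2 * (exp (-ρ * t) / ρ) := by
  have := abs_relaxationKernel_mul_abs_one_sub_le (t := t) hlam hρ (h := h)
  nlinarith [abs_nonneg (relaxationKernel lam t h ρ)]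

lemma abs_relaxationKernel_le_of_two_le (hρ : 0 < ρ) (hx : 2 ≤ lam * ρ ^ h) :
    |relaxationKernel lam t h ρ| ≤ 2 * (exp (-ρ * t) / ρ) / (lam * ρ ^ h) := by
  have hlam : 0 ≤ lam := nonneg_of_mul_nonneg_left (by linarith) (rpow_pos_of_pos hρ h)
  have := abs_relaxationKernel_mul_abs_one_sub_le (t := t) hlam hρ (h := h)
  rw [abs_of_nonpos (by linarith : 1 - lam * ρ ^ h ≤ 0)] at this
  rw [le_div_iff₀ (by linarith)]
  nlinarith [abs_nonneg (relaxationKernel lam t h ρ)]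

lemma relaxationKernel_isBigO {l : Filter ℝ} {H : ℝ → ℝ} (hlam : 0 ≤ lam)
    (hpos : ∀ᶠ ρ in l, 0 < ρ) (hsep : ∀ᶠ ρ in l, 1 / 2 ≤ |1 - lam * ρ ^ H ρ|) :
    (fun ρ ↦ relaxationKernel lam t (H ρ) ρ) =O[l] fun ρ ↦ exp (-ρ * t) / ρ := by
  refine IsBigO.of_bound 2 ?_
  filter_upwards [hpos, hsep] with ρ hρ hρsep
  rw [norm_eq_abs, norm_eq_abs, abs_of_pos (div_pos (exp_pos _) hρ)]
  exact abs_relaxationKernel_le_of_half_le hlam hρ hρsep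

end Kernel

section Exponent

variable {α₁ α₂ c ρ : ℝ}

lemma hfun_eq_of_ne (hρ : ρ ≠ c) : hfun α₁ α₂ c ρ = -α₁ + (α₁ - α₂) * c * (c - ρ)⁻¹ := by
  have : c - ρ ≠ 0 := sub_ne_zero.2 hρ.symm
  rw [hfun]
  field_simp
  ring

lemma hfun_le_neg_of_lt (h12 : α₁ ≤ α₂) (hc : 0 ≤ c) (hρ : ρ < c) : hfun α₁ α₂ c ρ ≤ -α₁ := by
  rw [hfun, div_le_iff₀ (sub_pos.2 hρ)]
  nlinarith

lemma continuousAt_hfun (hρ : ρ ≠ c) : ContinuousAt (hfun α₁ α₂ c) ρ :=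
  (continuousAt_const.mul continuousAt_id).sub continuousAt_const |>.div
    (continuousAt_const.sub continuousAt_id) (sub_ne_zero.2 hρ.symm)

lemma tendsto_hfun_atTop : Tendsto (hfun α₁ α₂ c) atTop (𝓝 (-α₁)) := by
  have hinv : Tendsto (fun ρ : ℝ ↦ (c - ρ)⁻¹) atTop (𝓝 0) :=
    tendsto_inv_atBot_zero.comp (tendsto_atBot_add_const_left _ c tendsto_neg_atTop_atBot)
  have := (tendsto_const_nhds (x := -α₁)).add (hinv.const_mul ((α₁ - α₂) * c))
  rw [mul_zero, add_zero] at this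
  exact this.congr' ((eventually_gt_atTop c).mono fun ρ hρ ↦ (hfun_eq_of_ne hρ.ne').symm)

lemma tendsto_hfun_nhdsLT (h12 : α₁ < α₂) (hc : 0 < c) :
    Tendsto (hfun α₁ α₂ c) (𝓝[<] c) atBot :=
  (tendsto_atBot_add_const_left _ (-α₁) ((tendsto_inv_const_sub_nhdsLT c).const_mul_atTop_of_neg
    (by nlinarith))).congr' (eventually_nhdsWithin_of_forall fun ρ hρ ↦ (hfun_eq_of_ne hρ.ne).symm)

lemma tendsto_hfun_nhdsGT (h12 : α₁ < α₂) (hc : 0 < c) :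
    Tendsto (hfun α₁ α₂ c) (𝓝[>] c) atTop :=
  (tendsto_atTop_add_const_left _ (-α₁) ((tendsto_inv_const_sub_nhdsGT c).const_mul_atBot_of_neg
    (by nlinarith))).congr' (eventually_nhdsWithin_of_forall fun ρ hρ ↦ (hfun_eq_of_ne hρ.ne').symm)

lemma tendsto_rpow_hfun_atTop (h0 : 0 < α₁) :
    Tendsto (fun ρ ↦ ρ ^ hfun α₁ α₂ c ρ) atTop (𝓝 0) :=
  tendsto_rpow_nhds_zero_of_log_mul (eventually_gt_atTop 0)
    (tendsto_log_atTop.atTop_mul_neg (neg_lt_zero.2 h0) tendsto_hfun_atTop)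

lemma tendsto_rpow_hfun_nhdsLT (h12 : α₁ < α₂) (hc : 1 < c) :
    Tendsto (fun ρ ↦ ρ ^ hfun α₁ α₂ c ρ) (𝓝[<] c) (𝓝 0) :=
  tendsto_rpow_nhds_zero_of_log_mul (eventually_nhdsWithin_of_eventually_nhds
    (eventually_gt_nhds (by linarith))) ((continuousAt_log (by linarith)).tendsto.mono_left
      nhdsWithin_le_nhds |>.pos_mul_atBot (log_pos hc) (tendsto_hfun_nhdsLT h12 (by linarith)))

lemma tendsto_rpow_hfun_nhdsGT (h12 : α₁ < α₂) (hc : 1 < c) :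
    Tendsto (fun ρ ↦ ρ ^ hfun α₁ α₂ c ρ) (𝓝[>] c) atTop :=
  tendsto_rpow_atTop_of_log_mul (eventually_nhdsWithin_of_eventually_nhds
    (eventually_gt_nhds (by linarith))) ((continuousAt_log (by linarith)).tendsto.mono_left
      nhdsWithin_le_nhds |>.pos_mul_atTop (log_pos hc) (tendsto_hfun_nhdsGT h12 (by linarith)))

end Exponent

noncomputable def scarpiIntegrand (α₁ α₂ c lam t ρ : ℝ) : ℝ :=
  relaxationKernel lam t (hfun α₁ α₂ c ρ) ρ

section Integrand

variable {α₁ α₂ c lam t : ℝ}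

lemma measurable_scarpiIntegrand : Measurable (scarpiIntegrand α₁ α₂ c lam t) := by
  unfold scarpiIntegrand relaxationKernel hfun
  fun_prop

lemma continuousAt_scarpiIntegrand {ρ : ℝ} (hρ : 0 < ρ) (hρc : ρ ≠ c)
    (hD : 1 + 2 * lam * ρ ^ hfun α₁ α₂ c ρ * cos (π * hfun α₁ α₂ c ρ) +
      lam ^ 2 * ρ ^ (2 * hfun α₁ α₂ c ρ) ≠ 0) :
    ContinuousAt (scarpiIntegrand α₁ α₂ c lam t) ρ := by
  have hh := continuousAt_hfun (α₁ := α₁) (α₂ := α₂) hρc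
  have hP := continuousAt_id.rpow hh (Or.inl hρ.ne')
  have hP2 := continuousAt_id.rpow (hh.const_mul 2) (Or.inl hρ.ne')
  unfold scarpiIntegrand relaxationKernel
  fun_prop (disch := exact mul_ne_zero hρ.ne' hD)

lemma integrableAtFilter_scarpiIntegrand_atTop (h0 : 0 < α₁) (hlam : 0 ≤ lam) (ht : 0 < t) :
    IntegrableAtFilter (scarpiIntegrand α₁ α₂ c lam t) atTop := by
  have hsep := eventually_half_le_abs_one_sub_of_tendsto_zero
    (by simpa using (tendsto_rpow_hfun_atTop (α₂ := α₂) (c := c) h0).const_mul lam)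
  have hdecay : (fun ρ ↦ exp (-ρ * t) / ρ) =O[atTop] fun ρ ↦ exp (-t * ρ) := by
    refine IsBigO.of_bound 1 ((eventually_ge_atTop 1).mono fun ρ hρ ↦ ?_)
    rw [norm_eq_abs, norm_eq_abs, abs_of_pos (div_pos (exp_pos _) (by linarith)),
      abs_of_pos (exp_pos _), one_mul, show -t * ρ = -ρ * t by ring]
    exact div_le_self (exp_pos _).le hρ
  exact ((relaxationKernel_isBigO hlam (eventually_gt_atTop 0) hsep).trans
    hdecay).integrableAtFilter
    measurable_scarpiIntegrand.aestronglyMeasurable.stronglyMeasurableAtFilter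
    ⟨Ioi 0, Ioi_mem_atTop 0, exp_neg_integrableOn_Ioi 0 ht⟩

lemma abs_scarpiIntegrand_le_rpow (h12 : α₁ ≤ α₂) (hlam : 0 < lam) (ht : 0 ≤ t) {ρ : ℝ}
    (hρ : 0 < ρ) (hρ1 : ρ ≤ 1) (hρc : ρ < c) (hx : 2 ≤ lam * ρ ^ (-α₁)) :
    |scarpiIntegrand α₁ α₂ c lam t ρ| ≤ 2 / lam * ρ ^ (α₁ - 1) := by
  have hpow : ρ ^ (-α₁) ≤ ρ ^ hfun α₁ α₂ c ρ :=
    rpow_le_rpow_of_exponent_ge hρ hρ1 (hfun_le_neg_of_lt h12 (hρ.le.trans hρc.le) hρc)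
  have hexp : exp (-ρ * t) ≤ 1 := exp_le_one_iff.2 (by nlinarith)
  have hpos : 0 < ρ ^ (-α₁) := rpow_pos_of_pos hρ _
  calc |scarpiIntegrand α₁ α₂ c lam t ρ|
      ≤ 2 * (exp (-ρ * t) / ρ) / (lam * ρ ^ hfun α₁ α₂ c ρ) :=
        abs_relaxationKernel_le_of_two_le hρ (hx.trans (by gcongr))
    _ ≤ 2 * (1 / ρ) / (lam * ρ ^ (-α₁)) := by gcongr
    _ = 2 / lam * ρ ^ (α₁ - 1) := by
        rw [rpow_neg hρ.le, rpow_sub_one hρ.ne']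
        field_simp

lemma integrableAtFilter_scarpiIntegrand_nhdsGT_zero (h0 : 0 < α₁) (h12 : α₁ ≤ α₂) (hc : 0 < c)
    (hlam : 0 < lam) (ht : 0 ≤ t) :
    IntegrableAtFilter (scarpiIntegrand α₁ α₂ c lam t) (𝓝[>] 0) := by
  have hx : ∀ᶠ ρ in 𝓝[>] 0, 2 ≤ lam * ρ ^ (-α₁) :=
    ((tendsto_rpow_neg_nhdsGT_zero (neg_lt_zero.2 h0)).const_mul_atTop hlam).eventually_ge_atTop 2
  have hO : scarpiIntegrand α₁ α₂ c lam t =O[𝓝[>] 0] fun ρ ↦ ρ ^ (α₁ - 1) := by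
    refine IsBigO.of_bound (2 / lam) ?_
    filter_upwards [Ioc_mem_nhdsGT one_pos, Ioo_mem_nhdsGT hc, hx] with ρ hρ1 hρc hρx
    rw [norm_eq_abs, norm_eq_abs, abs_of_pos (rpow_pos_of_pos hρ1.1 _)]
    exact abs_scarpiIntegrand_le_rpow h12 hlam ht hρ1.1 hρ1.2 hρc.2 hρx
  exact hO.integrableAtFilter
    measurable_scarpiIntegrand.aestronglyMeasurable.stronglyMeasurableAtFilter
    ⟨Ioo 0 1, Ioo_mem_nhdsGT one_pos,
      (intervalIntegral.integrableOn_Ioo_rpow_iff one_pos).2 (by linarith)⟩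

lemma integrableAtFilter_scarpiIntegrand_nhds_c (h12 : α₁ < α₂) (hc : 1 < c) (hlam : 0 < lam) :
    IntegrableAtFilter (scarpiIntegrand α₁ α₂ c lam t) (𝓝 c) := by
  have hpos : ∀ᶠ ρ in 𝓝 c, 0 < ρ := eventually_gt_nhds (by linarith)
  have hbound : IntegrableAtFilter (fun ρ ↦ exp (-ρ * t) / ρ) (𝓝 c) := by
    have hm : Measurable fun ρ ↦ exp (-ρ * t) / ρ := by fun_prop
    exact (ContinuousAt.tendsto (by fun_prop (disch := positivity))).integrableAtFilter
      hm.aestronglyMeasurable.stronglyMeasurableAtFilter (volume.finiteAt_nhds c)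
  have hleft := relaxationKernel_isBigO (t := t) hlam.le (nhdsWithin_le_nhds hpos)
    (eventually_half_le_abs_one_sub_of_tendsto_zero
      (by simpa using (tendsto_rpow_hfun_nhdsLT h12 hc).const_mul lam))
  have hright := relaxationKernel_isBigO (t := t) hlam.le (nhdsWithin_le_nhds hpos)
    (eventually_half_le_abs_one_sub_of_tendsto_atTop
      ((tendsto_rpow_hfun_nhdsGT h12 hc).const_mul_atTop hlam))
  have hmeas : ∀ l, StronglyMeasurableAtFilter (scarpiIntegrand α₁ α₂ c lam t) l :=
    fun _ ↦ measurable_scarpiIntegrand.aestronglyMeasurable.stronglyMeasurableAtFilter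
  refine IntegrableAtFilter.nhds_of_nhdsNE ?_
  rw [← nhdsLT_sup_nhdsGT, IntegrableAtFilter.sup_iff]
  exact ⟨hleft.integrableAtFilter (hmeas _) (hbound.filter_mono nhdsWithin_le_nhds),
    hright.integrableAtFilter (hmeas _) (hbound.filter_mono nhdsWithin_le_nhds)⟩

end Integrand

theorem solution_integrand_integrable_general
    (α₁ α₂ c lam t : ℝ) (h0 : 0 < α₁) (h12 : α₁ < α₂)
    (hc : 0 < c) (hlam : 0 < lam) (ht : 0 < t) (hc1 : 1 < c)
    (hnz : ∀ ρ : ℝ, 0 < ρ → ρ ≠ c →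
      1 + 2 * lam * ρ ^ hfun α₁ α₂ c ρ * Real.cos (Real.pi * hfun α₁ α₂ c ρ) +
        lam ^ 2 * ρ ^ (2 * hfun α₁ α₂ c ρ) ≠ 0) :
    IntegrableOn (fun ρ : ℝ =>
        lam * ρ ^ hfun α₁ α₂ c ρ * Real.sin (Real.pi * hfun α₁ α₂ c ρ) * Real.exp (-ρ * t) /
          (ρ * (1 + 2 * lam * ρ ^ hfun α₁ α₂ c ρ * Real.cos (Real.pi * hfun α₁ α₂ c ρ) +
            lam ^ 2 * ρ ^ (2 * hfun α₁ α₂ c ρ))))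
      (Set.Ioi 0) := by
  change IntegrableOn (scarpiIntegrand α₁ α₂ c lam t) (Ioi 0)
  rw [integrableOn_Ioi_iff_integrableAtFilter_atTop_nhdsWithin]
  refine ⟨integrableAtFilter_scarpiIntegrand_atTop h0 hlam.le ht,
    integrableAtFilter_scarpiIntegrand_nhdsGT_zero h0 h12.le hc hlam ht.le, fun ρ hρ ↦ ?_⟩
  refine IntegrableAtFilter.filter_mono nhdsWithin_le_nhds ?_
  rcases eq_or_ne ρ c with rfl | hρc
  · exact integrableAtFilter_scarpiIntegrand_nhds_c h12 hc1 hlam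
  · exact (continuousAt_scarpiIntegrand hρ hρc (hnz ρ hρ hρc)).tendsto.integrableAtFilter
      measurable_scarpiIntegrand.aestronglyMeasurable.stronglyMeasurableAtFilter
      (volume.finiteAt_nhds ρ)

/-- If `c > 1` and the denominator never vanishes on `(0,∞) ∖ {c}`, the real-valued integrand
`ρ ↦ λ ρ^{h(ρ)} sin(π h(ρ)) e^{-ρ t}/(ρ(1 + 2λ ρ^{h(ρ)} cos(π h(ρ)) + λ² ρ^{2h(ρ)}))`
of the explicit solution formula is Lebesgue integrable on `(0,∞)`. -/
theorem solution_integrand_integrable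
    (α₁ α₂ c lam t : ℝ) (h0 : 0 < α₁) (h12 : α₁ < α₂) (h21 : α₂ < 1)
    (hc : 0 < c) (hlam : 0 < lam) (ht : 0 < t) (hc1 : 1 < c)
    (hnz : ∀ ρ : ℝ, 0 < ρ → ρ ≠ c →
      1 + 2 * lam * ρ ^ hfun α₁ α₂ c ρ * Real.cos (Real.pi * hfun α₁ α₂ c ρ) +
        lam ^ 2 * ρ ^ (2 * hfun α₁ α₂ c ρ) ≠ 0) :
    IntegrableOn (fun ρ : ℝ =>
        lam * ρ ^ hfun α₁ α₂ c ρ * Real.sin (Real.pi * hfun α₁ α₂ c ρ) * Real.exp (-ρ * t) /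
          (ρ * (1 + 2 * lam * ρ ^ hfun α₁ α₂ c ρ * Real.cos (Real.pi * hfun α₁ α₂ c ρ) +
            lam ^ 2 * ρ ^ (2 * hfun α₁ α₂ c ρ))))
      (Set.Ioi 0) :=
  solution_integrand_integrable_general α₁ α₂ c lam t h0 h12 hc hlam ht hc1 hnz
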